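/- arXiv:math/0405144 — 3 statements merged into one kernel-verified Lean document; each statement's English description precedes it below -/
import Mathlib

section
/- For integers m ≥ 2, every root z of φ_m(z) = (z+1)(z+2)···(z+m-1) - m! satisfies Re(z) ≤ 1, with equality only for z = 1. That is, if z ≠ 1 is a root then Re(z) < 1. -/
/-! For `Re z ≥ 1` every factor satisfies `‖z + j‖ ≥ Re z + j ≥ 1 + j`, so `‖∏ (z + j)‖ ≥ m!`,
and some inequality is strict unless `z = 1`: either `Im z ≠ 0`, so `Re w < ‖w‖` for each factor,
or `z` is real and `> 1`. -/

open Polynomial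

namespace Complex

theorem lt_norm_of_le_re_of_ne {z : ℂ} {a : ℝ} (hre : a ≤ z.re) (hz : z ≠ a) : a < ‖z‖ := by
  by_cases him : z.im = 0
  · have hlt : a < z.re := hre.lt_of_ne fun h => hz (ext (by simp [h]) (by simp [him]))
    exact hlt.trans_le (re_le_norm z)
  · exact hre.trans_lt ((le_abs_self _).trans_lt (abs_re_lt_norm.mpr him))

theorem add_lt_norm_add_ofReal {z : ℂ} {a : ℝ} (hre : a ≤ z.re) (hz : z ≠ a) (t : ℝ) :
    a + t < ‖z + t‖ :=
  lt_norm_of_le_re_of_ne (by simpa using hre) (by push_cast; simpa using hz)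

theorem factorial_lt_norm_prod_add {z : ℂ} (hre : 1 ≤ z.re) (hz : z ≠ 1) {n : ℕ} (hn : 0 < n) :
    ((n + 1).factorial : ℝ) < ‖∏ j ∈ Finset.range n, (z + ((j : ℂ) + 1))‖ := by
  have hfac : ((n + 1).factorial : ℝ) = ∏ j ∈ Finset.range n, (1 + ((j : ℝ) + 1)) := by
    rw [← Finset.prod_range_add_one_eq_factorial, Finset.prod_range_succ']
    push_cast
    simp only [mul_one]
    exact Finset.prod_congr rfl fun j _ => add_comm _ _
  rw [hfac, norm_prod]
  refine Finset.prod_lt_prod_of_nonempty (fun j _ => by positivity) (fun j _ => ?_)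
    (Finset.nonempty_range_iff.mpr hn.ne')
  exact_mod_cast add_lt_norm_add_ofReal (a := 1) (by simpa using hre) (by simpa using hz) (j + 1)

end Complex

theorem phi_roots_re_le_one (m : ℕ) (hm : 2 ≤ m) (z : ℂ)
    (hz : ((∏ j ∈ Finset.range (m - 1), (X + C ((j : ℂ) + 1))) -
      C ((m.factorial : ℂ))).IsRoot z) :
    z.re ≤ 1 ∧ (z ≠ 1 → z.re < 1) := by
  have hprod : ∏ j ∈ Finset.range (m - 1), (z + ((j : ℂ) + 1)) = m.factorial := by
    simpa [sub_eq_zero, eval_prod] using hz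
  have hlt : z ≠ 1 → z.re < 1 := by
    intro hz1
    by_contra! hre
    have h := Complex.factorial_lt_norm_prod_add hre hz1 (n := m - 1) (by omega)
    rw [hprod, Complex.norm_natCast, Nat.sub_add_cancel (by omega : 1 ≤ m)] at h
    exact h.false
  refine ⟨?_, hlt⟩
  rcases eq_or_ne z 1 with h1 | hz1
  · simp [h1]
  · exact (hlt hz1).le
end

section
/- If z is a nonreal complex root of φ_m(z) = (z+1)···(z+m-1) - m!, then its complex conjugate z̄ is also a root, and Re(z) < 1. -/
open Polynomial

noncomputable def phi (m : ℕ) : ℂ[X] :=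
  (∏ j ∈ Finset.range (m - 1), (X + C ((j : ℂ) + 1))) - C (m.factorial : ℂ)

theorem Polynomial.IsRoot.conj_of_map_conj_eq {p : ℂ[X]} (hp : p.map (starRingEnd ℂ) = p)
    {z : ℂ} (h : p.IsRoot z) : p.IsRoot (starRingEnd ℂ z) := by
  have := eval_map_apply (p := p) (f := starRingEnd ℂ) z
  rwa [hp, h.eq_zero, map_zero] at this

theorem map_conj_phi (m : ℕ) : (phi m).map (starRingEnd ℂ) = phi m := by
  simp [phi, Polynomial.map_sub, Polynomial.map_prod]

theorem eval_phi (m : ℕ) (z : ℂ) :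
    (phi m).eval z = ∏ j ∈ Finset.range (m - 1), (z + ((j : ℂ) + 1)) - m.factorial := by
  simp [phi, eval_prod]

theorem prod_range_add_two_eq_factorial (n : ℕ) :
    ∏ j ∈ Finset.range n, (j + 2) = (n + 1).factorial := by
  rw [← Finset.prod_range_add_one_eq_factorial, Finset.prod_range_succ']
  simp

theorem Complex.re_add_lt_norm_add_ofReal {z : ℂ} (hz : z.im ≠ 0) (a : ℝ) :
    z.re + a < ‖z + a‖ := by
  have : (z + a).im ≠ 0 := by simpa using hz
  calc z.re + a = (z + a).re := by simp
    _ ≤ |(z + a).re| := le_abs_self _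
    _ < ‖z + a‖ := Complex.abs_re_lt_norm.mpr this

/-- Off the real axis and right of `Re z = 1`, every factor `z + j + 1` is longer than `j + 2`. -/
theorem factorial_lt_norm_prod {z : ℂ} (hre : 1 ≤ z.re) (him : z.im ≠ 0) {n : ℕ} (hn : 0 < n) :
    ((n + 1).factorial : ℝ) < ‖∏ j ∈ Finset.range n, (z + ((j : ℂ) + 1))‖ := by
  rw [← prod_range_add_two_eq_factorial, norm_prod]
  push_cast
  refine Finset.prod_lt_prod_of_nonempty (fun j _ ↦ by positivity) (fun j _ ↦ ?_)
    (Finset.nonempty_range_iff.mpr hn.ne')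
  have := Complex.re_add_lt_norm_add_ofReal him ((j : ℝ) + 1)
  push_cast at this
  linarith

theorem re_lt_one_of_isRoot_phi {m : ℕ} (hm : 2 ≤ m) {z : ℂ} (hz : z.im ≠ 0)
    (hroot : (phi m).IsRoot z) : z.re < 1 := by
  have hprod : ∏ j ∈ Finset.range (m - 1), (z + ((j : ℂ) + 1)) = m.factorial := by
    rw [IsRoot, eval_phi, sub_eq_zero] at hroot
    exact hroot
  by_contra! hre
  have := factorial_lt_norm_prod hre hz (n := m - 1) (by omega)
  rw [Nat.sub_add_cancel (by omega), hprod, Complex.norm_natCast] at this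
  exact this.false

theorem phi_conj_root_and_re_lt_one (m : ℕ) (hm : 2 ≤ m) (z : ℂ) (hz : z.im ≠ 0)
    (hroot : ((∏ j ∈ Finset.range (m - 1), (X + C ((j : ℂ) + 1))) -
      C ((m.factorial : ℂ))).IsRoot z) :
    ((∏ j ∈ Finset.range (m - 1), (X + C ((j : ℂ) + 1))) -
      C ((m.factorial : ℂ))).IsRoot (starRingEnd ℂ z) ∧ z.re < 1 :=
  ⟨hroot.conj_of_map_conj_eq (map_conj_phi m), re_lt_one_of_isRoot_phi hm hz hroot⟩
end

section
/- Let λ₂ = σ + iτ with σ > 1/2 and τ ≠ 0. Let S₁ be Beta(1, m-1) distributed (the first spacing of m-1 uniforms on [0,1]), and conditionally on S₁ = s let J₁ be Binomial(n', s) with n' = n - (m-1). Then E[|J₁^{λ₂} - (nS₁)^{λ₂}|²] = o(n^{2σ}) as n → ∞, where z^{λ₂} := exp(λ₂ ln z) for z > 0 and 0^{λ₂} := 0. -/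
open MeasureTheory Filter Asymptotics

/-!
Writing `j = n · (j / n)` pulls the factor `n ^ (2σ)` out of every term, so it suffices that
`∫ w(s) E‖(J/n)^λ - s^λ‖² ds → 0`, where `w` is the Beta density and `J ~ Bin(n - (m-1), s)`.
For fixed `s` the inner expectation tends to `‖s^λ - s^λ‖² = 0` by Bernstein's theorem (the
shift from `J/(n - (m-1))` to `J/n` only costs a uniform-continuity error), and dominated
convergence applies because the integrand is continuous, hence bounded, on `[0,1]²`.
-/

open Set Topology

noncomputable def binomialExpectation (N : ℕ) (s : ℝ) (f : ℕ → ℝ) : ℝ :=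
  ∑ j ∈ Finset.range (N + 1), (N.choose j : ℝ) * s ^ j * (1 - s) ^ (N - j) * f j

lemma binomialExpectation_const (N : ℕ) (s c : ℝ) :
    binomialExpectation N s (fun _ => c) = c := by
  have h := add_pow s (1 - s) N
  rw [add_sub_cancel, one_pow] at h
  rw [binomialExpectation, ← Finset.sum_mul]
  convert one_mul c using 2
  exact (Finset.sum_congr rfl fun j _ => by ring).trans h.symm

lemma binomialExpectation_sub (N : ℕ) (s : ℝ) (f g : ℕ → ℝ) :
    binomialExpectation N s f - binomialExpectation N s g =
      binomialExpectation N s (fun j => f j - g j) := by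
  simp only [binomialExpectation, ← Finset.sum_sub_distrib, mul_sub]

lemma abs_binomialExpectation_sub_le {N : ℕ} {s ε : ℝ} (hs : s ∈ Icc (0 : ℝ) 1) {f g : ℕ → ℝ}
    (hfg : ∀ j ≤ N, |f j - g j| ≤ ε) :
    |binomialExpectation N s f - binomialExpectation N s g| ≤ ε := by
  rw [binomialExpectation_sub, ← binomialExpectation_const N s ε, binomialExpectation]
  refine (Finset.abs_sum_le_sum_abs _ _).trans (Finset.sum_le_sum fun j hj => ?_)
  have hw : 0 ≤ (N.choose j : ℝ) * s ^ j * (1 - s) ^ (N - j) :=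
    mul_nonneg (mul_nonneg (Nat.cast_nonneg _) (pow_nonneg hs.1 j))
      (pow_nonneg (sub_nonneg.2 hs.2) _)
  rw [abs_mul, abs_of_nonneg hw]
  exact mul_le_mul_of_nonneg_left (hfg j (Nat.lt_succ_iff.mp (Finset.mem_range.mp hj))) hw

lemma tendsto_binomialExpectation_div {f : ℝ → ℝ} (hf : ContinuousOn f (Icc 0 1)) {s : ℝ}
    (hs : s ∈ Icc (0 : ℝ) 1) :
    Tendsto (fun N : ℕ => binomialExpectation N s (fun j => f (j / N))) atTop (𝓝 (f s)) := by
  let F : C(unitInterval, ℝ) := ⟨fun x => f x, hf.comp_continuous continuous_subtype_val (·.2)⟩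
  have hB := ((continuous_eval_const (⟨s, hs⟩ : unitInterval)).tendsto F).comp
    (bernsteinApproximation_uniform F)
  refine hB.congr fun N => ?_
  simp [bernsteinApproximation.apply, bernstein_apply, binomialExpectation, F, bernstein.z,
    Fin.sum_univ_eq_sum_range (fun j => (N.choose j : ℝ) * s ^ j * (1 - s) ^ (N - j) * f (j / N))]

lemma dist_natCast_div_natCast_div_le {j N n : ℕ} (hj : j ≤ N) (hN : 0 < N) (hNn : N ≤ n) :
    dist ((j : ℝ) / n) (j / N) ≤ (n - N) / n := by
  have hN' : (0 : ℝ) < N := by exact_mod_cast hN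
  have hn' : (0 : ℝ) < n := by exact_mod_cast hN.trans_le hNn
  have hjN : (j : ℝ) ≤ N := by exact_mod_cast hj
  have hNn' : (N : ℝ) ≤ n := by exact_mod_cast hNn
  have hle : (j : ℝ) / n ≤ j / N := div_le_div_of_nonneg_left j.cast_nonneg hN' hNn'
  rw [Real.dist_eq, abs_sub_comm, abs_of_nonneg (sub_nonneg.2 hle),
    div_sub_div _ _ hN'.ne' hn'.ne', div_le_div_iff₀ (by positivity) hn']
  nlinarith [mul_le_mul_of_nonneg_right hjN (sub_nonneg.2 hNn')]

lemma natCast_div_mem_Icc {j n : ℕ} (hj : j ≤ n) : (j : ℝ) / n ∈ Icc (0 : ℝ) 1 :=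
  ⟨by positivity, div_le_one_of_le₀ (by exact_mod_cast hj) n.cast_nonneg⟩

lemma tendsto_binomialExpectation_sub_div {f : ℝ → ℝ} (hf : ContinuousOn f (Icc 0 1)) (k : ℕ)
    {s : ℝ} (hs : s ∈ Icc (0 : ℝ) 1) :
    Tendsto (fun n : ℕ => binomialExpectation (n - k) s (fun j => f (j / n))) atTop
      (𝓝 (f s)) := by
  have hshift := (tendsto_binomialExpectation_div hf hs).comp (tendsto_sub_atTop_nat k)
  have hdiff : Tendsto (fun n : ℕ => binomialExpectation (n - k) s (fun j => f (j / n)) -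
      binomialExpectation (n - k) s (fun j => f (j / (n - k : ℕ)))) atTop (𝓝 0) := by
    refine Metric.tendsto_nhds.2 fun ε hε => ?_
    obtain ⟨δ, hδ, hfδ⟩ := Metric.uniformContinuousOn_iff.1
      (isCompact_Icc.uniformContinuousOn_of_continuous hf) (ε / 2) (half_pos hε)
    have hsmall : ∀ᶠ n : ℕ in atTop, (k : ℝ) / n < δ :=
      (tendsto_const_div_atTop_nhds_zero_nat (k : ℝ)).eventually_lt_const hδ
    filter_upwards [hsmall, eventually_gt_atTop k] with n hkn hn
    rw [dist_zero_right, Real.norm_eq_abs]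
    refine (abs_binomialExpectation_sub_le hs fun j hj => (hfδ _ ?_ _ ?_ ?_).le).trans_lt
      (half_lt_self hε)
    · exact natCast_div_mem_Icc (hj.trans (Nat.sub_le n k))
    · exact natCast_div_mem_Icc hj
    · refine (dist_natCast_div_natCast_div_le hj (by omega) (Nat.sub_le n k)).trans_lt ?_
      rwa [Nat.cast_sub hn.le, sub_sub_cancel]
  simpa using hdiff.add hshift

lemma continuousOn_binomialExpectation {N : ℕ} {f : ℕ → ℝ → ℝ} {t : Set ℝ}
    (hf : ∀ j ≤ N, ContinuousOn (f j) t) :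
    ContinuousOn (fun s => binomialExpectation N s (fun j => f j s)) t :=
  continuousOn_finsetSum _ fun j hj =>
    (by fun_prop : Continuous fun s : ℝ => (N.choose j : ℝ) * s ^ j * (1 - s) ^ (N - j))
      |>.continuousOn.mul (hf j (Nat.lt_succ_iff.mp (Finset.mem_range.mp hj)))

lemma tendsto_setIntegral_mul_binomialExpectation {w : ℝ → ℝ} (hw : IntegrableOn w (Icc 0 1))
    {g : ℝ → ℝ → ℝ} (hg : ContinuousOn (Function.uncurry g) (Icc 0 1 ×ˢ Icc 0 1)) (k : ℕ) :
    Tendsto (fun n : ℕ => ∫ s in Icc (0 : ℝ) 1,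
        w s * binomialExpectation (n - k) s (fun j => g (j / n) s)) atTop
      (𝓝 (∫ s in Icc (0 : ℝ) 1, w s * g s s)) := by
  have hcont_left : ∀ x ∈ Icc (0 : ℝ) 1, ContinuousOn (g x) (Icc 0 1) := fun x hx =>
    hg.comp (continuousOn_const.prodMk continuousOn_id) fun s hs => ⟨hx, hs⟩
  have hcont_right : ∀ s ∈ Icc (0 : ℝ) 1, ContinuousOn (g · s) (Icc 0 1) := fun s hs =>
    hg.comp (continuousOn_id.prodMk continuousOn_const) fun x hx => ⟨hx, hs⟩
  obtain ⟨C, hC⟩ := (isCompact_Icc.prod isCompact_Icc).exists_bound_of_continuousOn hg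
  refine tendsto_integral_of_dominated_convergence (fun s => ‖w s‖ * C) (fun n => ?_)
    (hw.norm.mul_const C) (fun n => ?_) ?_
  · refine hw.aestronglyMeasurable.mul (ContinuousOn.aestronglyMeasurable ?_ measurableSet_Icc)
    exact continuousOn_binomialExpectation fun j hj =>
      hcont_left _ (natCast_div_mem_Icc (hj.trans (Nat.sub_le n k)))
  · filter_upwards [ae_restrict_mem measurableSet_Icc] with s hs
    have hE := abs_binomialExpectation_sub_le (N := n - k) (g := fun _ => 0) hs fun j hj => by
      simpa using hC (j / n, s) ⟨natCast_div_mem_Icc (hj.trans (Nat.sub_le n k)), hs⟩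
    rw [binomialExpectation_const, sub_zero] at hE
    rw [norm_mul, Real.norm_eq_abs (binomialExpectation _ _ _)]
    gcongr
  · filter_upwards [ae_restrict_mem measurableSet_Icc] with s hs
    exact (tendsto_binomialExpectation_sub_div (hcont_right s hs) k hs).const_mul (w s)

lemma norm_ofReal_mul_cpow_sub_ofReal_mul_cpow {c x y : ℝ} (hc : 0 < c) (hx : 0 ≤ x)
    (hy : 0 ≤ y) (lam : ℂ) :
    ‖((c * x : ℝ) : ℂ) ^ lam - ((c * y : ℝ) : ℂ) ^ lam‖ =
      c ^ lam.re * ‖(x : ℂ) ^ lam - (y : ℂ) ^ lam‖ := by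
  rw [Complex.ofReal_mul, Complex.ofReal_mul, Complex.mul_cpow_ofReal_nonneg hc.le hx,
    Complex.mul_cpow_ofReal_nonneg hc.le hy, ← mul_sub, norm_mul,
    Complex.norm_cpow_eq_rpow_re_of_pos hc]

theorem mixed_binomial_power_estimate_general (m : ℕ)
    (lam : ℂ) (hσ : 1 / 2 < lam.re) :
    (fun n : ℕ =>
        ∫ s in Set.Icc (0 : ℝ) 1,
          ((m - 1 : ℝ) * (1 - s) ^ (m - 2)) *
            ∑ j ∈ Finset.range (n - (m - 1) + 1),
              ((n - (m - 1)).choose j : ℝ) * s ^ j * (1 - s) ^ (n - (m - 1) - j) *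
                (‖(j : ℂ) ^ lam - (((n : ℝ) * s : ℝ) : ℂ) ^ lam‖) ^ 2)
      =o[atTop] fun n : ℕ => (n : ℝ) ^ (2 * lam.re) := by
  have hcpow : Continuous fun x : ℝ => (x : ℂ) ^ lam :=
    Complex.continuous_ofReal_cpow_const (by linarith)
  set H : ℝ → ℝ → ℝ := fun x s => ‖(x : ℂ) ^ lam - (s : ℂ) ^ lam‖ ^ 2
  have hH : Continuous (Function.uncurry H) :=
    ((hcpow.comp continuous_fst).sub (hcpow.comp continuous_snd)).norm.pow 2
  have hlim := tendsto_setIntegral_mul_binomialExpectation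
    (by fun_prop : Continuous fun s : ℝ => (m - 1 : ℝ) * (1 - s) ^ (m - 2)).integrableOn_Icc
    hH.continuousOn (m - 1)
  simp only [H, sub_self, norm_zero, zero_pow two_ne_zero, mul_zero, integral_zero] at hlim
  refine isLittleO_iff_exists_eq_mul.2 ⟨_, hlim, ?_⟩
  filter_upwards [eventually_gt_atTop 0] with n hn
  have hn' : (0 : ℝ) < n := by exact_mod_cast hn
  rw [Pi.mul_apply, ← integral_mul_const]
  refine setIntegral_congr_fun measurableSet_Icc fun s hs => ?_
  simp only [binomialExpectation, mul_assoc, Finset.sum_mul]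
  refine congrArg _ (congrArg _ (Finset.sum_congr rfl fun j _ => ?_))
  have hj : (j : ℂ) = ((n * (j / n) : ℝ) : ℂ) := by rw [mul_div_cancel₀ _ hn'.ne']; simp
  rw [hj, norm_ofReal_mul_cpow_sub_ofReal_mul_cpow hn' (by positivity) hs.1, mul_pow,
    ← Real.rpow_mul_natCast hn'.le]
  ring_nf

/-- With `S₁ ~ Beta(1, m-1)` and, conditionally on `S₁ = s`, `J₁ ~ Binomial(n-(m-1), s)`,
the mixed expectation `E[|J₁^λ - (nS₁)^λ|²]`, written out as an integral against the
Beta density of the binomial expectation, is `o(n^{2σ})` where `σ = Re λ > 1/2`. -/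
theorem mixed_binomial_power_estimate (m : ℕ) (hm : 2 ≤ m)
    (lam : ℂ) (hσ : 1 / 2 < lam.re) (hτ : lam.im ≠ 0) :
    (fun n : ℕ =>
        ∫ s in Set.Icc (0 : ℝ) 1,
          ((m - 1 : ℝ) * (1 - s) ^ (m - 2)) *
            ∑ j ∈ Finset.range (n - (m - 1) + 1),
              ((n - (m - 1)).choose j : ℝ) * s ^ j * (1 - s) ^ (n - (m - 1) - j) *
                (‖(j : ℂ) ^ lam - (((n : ℝ) * s : ℝ) : ℂ) ^ lam‖) ^ 2)
      =o[atTop] fun n : ℕ => (n : ℝ) ^ (2 * lam.re) :=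
  mixed_binomial_power_estimate_general m lam hσ
end
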